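/- Let n ≥ 2, λ, R > 0, and let f(t) = √(2λ/(πR)) · t. Define w(x,t) = -(1/λ) log cos(λ(√(|x|² + 2(n-1)t) - R)) + λt + f(t) on the set of (x,t) with t ∈ [0, R²/(2(n-1))] and R - π/(2λ) < √(|x|² + 2(n-1)t) < R + π/(2λ), x ≠ 0. Then w satisfies the supersolution inequality -∂_t w + (δ^{ij} - w^i w^j/(1 + |∇w|²)) w_{ij} ≤ 0. -/

import Mathlib

/-!
Write `u = |x|² + 2(n-1)t`, `ρ = √u`, `θ = λ(ρ - R)` and `φ(u) = -(1/λ) log cos(λ(√u - R))`, so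
that `w = φ(u) + λt + f(t)`. Being a function of `|x|²`, `w` has gradient `P x` and Hessian
`P δ + Q x xᵀ` with `P = 2φ'(u) = tan θ / ρ` and `Q = 4φ''(u)`, and the operator collapses to
`(n-1)P + (P + Q|x|²)/(1 + P²|x|²)`; the term `(n-1)P` cancels against `∂ₜw = (n-1)P + λ + f'`.
What is left is `-f' + (1 - |x|²/ρ²)(tan θ/ρ - λ)/(1 + tan²θ |x|²/ρ²)`, and it suffices that
`tan θ · ρ ≤ √(2λ/(πR)) (ρ² + tan²θ |x|²)`. Only `θ > 0` matters; then `|x|² ≥ ρ² - R² ≥ 2Rθ/λ`,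
which makes this AM-GM once `θ ≥ π/16`, while for smaller `θ` already `tan θ ≤ 2θ ≤ √(2λ/(πR)) ρ`.
-/

open Real Set Filter Topology

/-- The rotationally symmetric barrier over a shrinking annulus,
`w(x,t) = -(1/λ) log cos(λ(√(|x|² + 2(n-1)t) - R)) + λ t + f(t)`
with `f(t) = √(2λ/(πR)) t`. -/
noncomputable def annulusBarrier (n : ℕ) (lam R : ℝ)
    (x : EuclideanSpace ℝ (Fin n)) (t : ℝ) : ℝ :=
  -(1 / lam) * Real.log (Real.cos (lam *
      (Real.sqrt (‖x‖ ^ 2 + 2 * ((n : ℝ) - 1) * t) - R))) +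
    lam * t + Real.sqrt (2 * lam / (Real.pi * R)) * t

theorem mul_mem_Icc_of_mem_Icc_div {a t C : ℝ} (hC : 0 ≤ C) (ht : t ∈ Icc 0 (C / a)) :
    a * t ∈ Icc 0 C := by
  rcases le_or_gt a 0 with ha | ha
  · obtain rfl : t = 0 := le_antisymm (ht.2.trans (div_nonpos_of_nonneg_of_nonpos hC ha)) ht.1
    simpa using hC
  · exact ⟨mul_nonneg ha.le ht.1, (le_div_iff₀' ha).1 ht.2⟩

theorem mul_sub_mem_Ioo {c d R ρ : ℝ} (hc : 0 < c) (h1 : R - d / (2 * c) < ρ)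
    (h2 : ρ < R + d / (2 * c)) : c * (ρ - R) ∈ Ioo (-(d / 2)) (d / 2) := by
  have : c * (d / (2 * c)) = d / 2 := by field_simp
  constructor <;> nlinarith

section Radial

variable {ι : Type*} [Fintype ι] [DecidableEq ι] {g : ℝ → ℝ} {a : ℝ}

theorem fderiv_comp_norm_sq_add_single {g' : ℝ} {y : EuclideanSpace ℝ ι}
    (hg : HasDerivAt g g' (‖y‖ ^ 2 + a)) (i : ι) :
    fderiv ℝ (fun z : EuclideanSpace ℝ ι => g (‖z‖ ^ 2 + a)) y (EuclideanSpace.single i 1) =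
      2 * g' * y i := by
  have hw : HasFDerivAt (fun z : EuclideanSpace ℝ ι => g (‖z‖ ^ 2 + a))
      (g' • 2 • innerSL ℝ y) y :=
    hg.comp_hasFDerivAt y ((hasStrictFDerivAt_norm_sq y).hasFDerivAt.add_const a)
  rw [hw.fderiv]
  simp only [smul_apply, coe_innerSL_apply, EuclideanSpace.inner_single_right, Real.ringHom_apply,
    one_mul, nsmul_eq_mul, Nat.cast_ofNat, smul_eq_mul]
  ring

theorem fderiv_fderiv_comp_norm_sq_add_single {g' : ℝ → ℝ} {g'' : ℝ} {x : EuclideanSpace ℝ ι}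
    (hg : ∀ᶠ u in 𝓝 (‖x‖ ^ 2 + a), HasDerivAt g (g' u) u)
    (hg' : HasDerivAt g' g'' (‖x‖ ^ 2 + a)) (i j : ι) :
    fderiv ℝ (fun y => fderiv ℝ (fun z : EuclideanSpace ℝ ι => g (‖z‖ ^ 2 + a)) y
        (EuclideanSpace.single i 1)) x (EuclideanSpace.single j 1) =
      2 * g' (‖x‖ ^ 2 + a) * (if i = j then 1 else 0) + 4 * g'' * x i * x j := by
  have hF : ∀ y : EuclideanSpace ℝ ι, HasFDerivAt (fun z : EuclideanSpace ℝ ι => ‖z‖ ^ 2 + a)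
      (2 • innerSL ℝ y) y := fun y => (hasStrictFDerivAt_norm_sq y).hasFDerivAt.add_const a
  have hgrad : (fun y => fderiv ℝ (fun z : EuclideanSpace ℝ ι => g (‖z‖ ^ 2 + a)) y
      (EuclideanSpace.single i 1)) =ᶠ[𝓝 x] fun y => 2 * g' (‖y‖ ^ 2 + a) * y i := by
    have hcont : ContinuousAt (fun y : EuclideanSpace ℝ ι => ‖y‖ ^ 2 + a) x := by fun_prop
    filter_upwards [hcont.eventually hg] with y hy
    exact fderiv_comp_norm_sq_add_single hy i
  have hD : HasFDerivAt (fun y : EuclideanSpace ℝ ι => 2 * g' (‖y‖ ^ 2 + a) * y i)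
      ((2 * g' (‖x‖ ^ 2 + a)) • EuclideanSpace.proj (𝕜 := ℝ) i +
        x i • ((2 : ℝ) • g'' • 2 • innerSL ℝ x)) x :=
    ((hg'.comp_hasFDerivAt x (hF x)).const_mul 2).mul (EuclideanSpace.proj (𝕜 := ℝ) i).hasFDerivAt
  rw [hgrad.fderiv_eq, hD.fderiv]
  simp only [add_apply, smul_apply, PiLp.proj_apply, PiLp.single_apply, smul_eq_mul, mul_ite,
    mul_one, mul_zero, coe_innerSL_apply, EuclideanSpace.inner_single_right, Real.ringHom_apply,
    one_mul, nsmul_eq_mul, Nat.cast_ofNat, add_right_inj]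
  ring

theorem meanCurvatureOperator_radial (x : EuclideanSpace ℝ ι) (P Q : ℝ) :
    ∑ i, ∑ j, ((if i = j then (1 : ℝ) else 0) -
        P * x i * (P * x j) / (1 + ∑ k, (P * x k) ^ 2)) *
        (P * (if i = j then 1 else 0) + Q * x i * x j) =
      ((Fintype.card ι : ℝ) - 1) * P + (P + Q * ‖x‖ ^ 2) / (1 + P ^ 2 * ‖x‖ ^ 2) := by
  have hsum : ∑ k, (P * x k) ^ 2 = P ^ 2 * ‖x‖ ^ 2 := by
    simp only [mul_pow, ← Finset.mul_sum, EuclideanSpace.real_norm_sq_eq]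
  rw [hsum]
  set D := 1 + P ^ 2 * ‖x‖ ^ 2
  have hD : D ≠ 0 := by positivity
  have hterm : ∀ i j, ((if i = j then (1 : ℝ) else 0) - P * x i * (P * x j) / D) *
      (P * (if i = j then 1 else 0) + Q * x i * x j) =
      (if i = j then P + Q * x i ^ 2 - P ^ 3 * x i ^ 2 / D else 0) -
        P ^ 2 * Q / D * x i ^ 2 * x j ^ 2 := by
    intro i j
    split_ifs with h
    · subst h; ring
    · ring
  simp only [hterm, Finset.sum_sub_distrib, Finset.sum_ite_eq, Finset.mem_univ, if_true]
  simp only [Finset.sum_add_distrib, Finset.sum_const, Finset.card_univ, nsmul_eq_mul,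
    mul_div_assoc, ← Finset.mul_sum, ← Finset.sum_mul, ← Finset.sum_div,
    ← EuclideanSpace.real_norm_sq_eq]
  field_simp
  ring

end Radial

theorem hasDerivAt_neg_log_cos_sqrt {lam : ℝ} (R : ℝ) (hlam : lam ≠ 0) {u : ℝ} (hu : 0 < u)
    (hcos : cos (lam * (√u - R)) ≠ 0) :
    HasDerivAt (fun v => -(1 / lam) * log (cos (lam * (√v - R))))
      (tan (lam * (√u - R)) / (2 * √u)) u := by
  have hθ : HasDerivAt (fun v => lam * (√v - R)) (lam * (1 / (2 * √u))) u :=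
    ((hasDerivAt_sqrt hu.ne').sub_const R).const_mul lam
  refine ((hθ.cos.log hcos).const_mul (-(1 / lam))).congr_deriv ?_
  have : √u ≠ 0 := (sqrt_pos.2 hu).ne'
  rw [tan_eq_sin_div_cos]
  field_simp

theorem hasDerivAt_tan_sqrt_div {lam : ℝ} (R : ℝ) {u : ℝ} (hu : 0 < u)
    (hcos : cos (lam * (√u - R)) ≠ 0) :
    HasDerivAt (fun v => tan (lam * (√v - R)) / (2 * √v))
      (lam * (1 + tan (lam * (√u - R)) ^ 2) / (4 * √u ^ 2) -
        tan (lam * (√u - R)) / (4 * √u ^ 3)) u := by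
  have hθ : HasDerivAt (fun v => lam * (√v - R)) (lam * (1 / (2 * √u))) u :=
    ((hasDerivAt_sqrt hu.ne').sub_const R).const_mul lam
  refine (((hasDerivAt_tan hcos).comp u hθ).div ((hasDerivAt_sqrt hu.ne').const_mul 2)
    (by positivity)).congr_deriv ?_
  have : √u ≠ 0 := (sqrt_pos.2 hu).ne'
  rw [Function.comp_apply, ← inv_one_add_tan_sq hcos]
  field_simp
  ring

theorem tan_le_two_mul {θ : ℝ} (h0 : 0 ≤ θ) (h : θ ≤ π / 3) : tan θ ≤ 2 * θ := by
  have hcos : 1 / 2 ≤ cos θ := by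
    simpa [cos_pi_div_three] using cos_le_cos_of_nonneg_of_le_pi h0 (by linarith [pi_pos]) h
  rw [tan_eq_sin_div_cos, div_le_iff₀ (by linarith)]
  nlinarith [sin_le h0]

theorem tan_mul_le_sqrt_mul {lam R ρ b : ℝ} (hlam : 0 < lam) (hR : 0 < R) (hρ : 0 ≤ ρ)
    (hb : 0 ≤ b) (hbR : ρ ^ 2 - R ^ 2 ≤ b) (hθ : lam * (ρ - R) ∈ Ioo (-(π / 2)) (π / 2)) :
    tan (lam * (ρ - R)) * ρ ≤ √(2 * lam / (π * R)) * (ρ ^ 2 + tan (lam * (ρ - R)) ^ 2 * b) := by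
  set θ := lam * (ρ - R) with hθ_def
  set T := tan θ
  set c := √(2 * lam / (π * R))
  rcases le_or_gt T 0 with hT | hT
  · calc T * ρ ≤ 0 := mul_nonpos_of_nonpos_of_nonneg hT hρ
      _ ≤ c * (ρ ^ 2 + T ^ 2 * b) := by positivity
  have hθ0 : 0 < θ := by
    by_contra! h
    exact hT.not_ge (tan_nonpos_of_nonpos_of_neg_pi_div_two_le h hθ.1.le)
  have hc0 : 0 < c := sqrt_pos.2 (by positivity)
  have hc2 : c ^ 2 * R = 2 * lam / π := by
    rw [sq_sqrt (by positivity)]; field_simp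
  have hRb : 2 * R * θ ≤ lam * b := by
    have : R < ρ := by nlinarith
    nlinarith
  suffices h : lam * (T * ρ) ≤ lam * (c * ρ ^ 2) + 2 * c * R * θ * T ^ 2 by
    nlinarith [mul_le_mul_of_nonneg_left hRb (by positivity : 0 ≤ c * T ^ 2)]
  rcases le_or_gt (π / 16) θ with hbig | hsmall
  · have h16 : lam ≤ 8 * c ^ 2 * R * θ := by
      rw [mul_assoc 8, mul_assoc, hc2]; field_simp; nlinarith [pi_pos]
    have hamgm : 4 * c * (lam * (c * ρ ^ 2) + 2 * c * R * θ * T ^ 2 - lam * (T * ρ)) =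
        lam * (2 * c * ρ - T) ^ 2 + T ^ 2 * (8 * c ^ 2 * R * θ - lam) := by ring
    have : 0 ≤ 4 * c * (lam * (c * ρ ^ 2) + 2 * c * R * θ * T ^ 2 - lam * (T * ρ)) := by
      rw [hamgm]; have := sub_nonneg.2 h16; positivity
    nlinarith
  · have hT2 : T ^ 2 ≤ 8 * θ / π := by
      have := tan_le_two_mul hθ0.le (by linarith [pi_pos])
      rw [le_div_iff₀ pi_pos]
      nlinarith [pi_lt_d2, pi_pos]
    have hρ2 : 8 * θ / π ≤ (c * ρ) ^ 2 := by
      have hρθ : lam * ρ = lam * R + θ := by rw [hθ_def]; ring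
      have : 4 * lam * R * θ ≤ (lam * ρ) ^ 2 := by rw [hρθ]; nlinarith [sq_nonneg (lam * R - θ)]
      calc 8 * θ / π = 4 * lam * R * θ * c ^ 2 / lam ^ 2 := by
            rw [show 4 * lam * R * θ * c ^ 2 = 4 * lam * θ * (c ^ 2 * R) by ring, hc2]
            field_simp
            norm_num
        _ ≤ (lam * ρ) ^ 2 * c ^ 2 / lam ^ 2 := by gcongr
        _ = (c * ρ) ^ 2 := by field_simp
    have hcρ : T ≤ c * ρ := (sq_le_sq₀ hT.le (by positivity)).1 (hT2.trans hρ2)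
    have : 0 ≤ 2 * c * R * θ * T ^ 2 := by positivity
    nlinarith [mul_le_mul_of_nonneg_left (mul_le_mul_of_nonneg_right hcρ hρ) hlam.le]

theorem radialQuotient_sub_le_of_mul_le {lam ρ b T c : ℝ} (hlam : 0 ≤ lam) (hρ : 0 < ρ)
    (hb : 0 ≤ b) (hbρ : b ≤ ρ ^ 2) (hc : 0 ≤ c) (hT : T * ρ ≤ c * (ρ ^ 2 + T ^ 2 * b)) :
    (T / ρ + (lam * (1 + T ^ 2) / ρ ^ 2 - T / ρ ^ 3) * b) / (1 + (T / ρ) ^ 2 * b) - lam ≤ c := by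
  have hD : 0 < ρ ^ 2 + T ^ 2 * b := by positivity
  have hform : (T / ρ + (lam * (1 + T ^ 2) / ρ ^ 2 - T / ρ ^ 3) * b) / (1 + (T / ρ) ^ 2 * b) -
      lam = (ρ ^ 2 - b) * (T * ρ - lam * ρ ^ 2) / (ρ ^ 2 * (ρ ^ 2 + T ^ 2 * b)) := by
    field_simp
    ring
  rw [hform, div_le_iff₀ (by positivity)]
  have h1 : (ρ ^ 2 - b) * (T * ρ - lam * ρ ^ 2) ≤ (ρ ^ 2 - b) * (T * ρ) := by
    have : 0 ≤ ρ ^ 2 - b := by linarith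
    nlinarith [mul_nonneg this (mul_nonneg hlam (sq_nonneg ρ))]
  rcases le_or_gt T 0 with hT0 | hT0
  · nlinarith [mul_nonpos_of_nonpos_of_nonneg hT0 hρ.le, mul_nonneg hc hD.le]
  · nlinarith [mul_le_mul_of_nonneg_left hT (sq_nonneg ρ), mul_nonneg hb (mul_pos hT0 hρ).le,
      mul_nonneg hc hD.le]

section annulusBarrier

variable {n : ℕ} {lam R t : ℝ} {x : EuclideanSpace ℝ (Fin n)}

theorem hasDerivAt_annulusBarrier_time (hlam : lam ≠ 0)
    (hs : 0 < ‖x‖ ^ 2 + 2 * ((n : ℝ) - 1) * t)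
    (hcos : cos (lam * (√(‖x‖ ^ 2 + 2 * ((n : ℝ) - 1) * t) - R)) ≠ 0) :
    HasDerivAt (fun s => annulusBarrier n lam R x s)
      (((n : ℝ) - 1) * (2 * (tan (lam * (√(‖x‖ ^ 2 + 2 * ((n : ℝ) - 1) * t) - R)) /
          (2 * √(‖x‖ ^ 2 + 2 * ((n : ℝ) - 1) * t)))) + lam + √(2 * lam / (π * R))) t := by
  have hin : HasDerivAt (fun s => ‖x‖ ^ 2 + 2 * ((n : ℝ) - 1) * s) (2 * ((n : ℝ) - 1)) t := by
    simpa using ((hasDerivAt_id t).const_mul (2 * ((n : ℝ) - 1))).const_add (‖x‖ ^ 2)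
  have := (((hasDerivAt_neg_log_cos_sqrt R hlam hs hcos).comp t hin).add
    ((hasDerivAt_id t).const_mul lam)).add ((hasDerivAt_id t).const_mul √(2 * lam / (π * R)))
  exact this.congr_deriv (by ring)

theorem fderiv_annulusBarrier_single (hlam : lam ≠ 0)
    (hs : 0 < ‖x‖ ^ 2 + 2 * ((n : ℝ) - 1) * t)
    (hcos : cos (lam * (√(‖x‖ ^ 2 + 2 * ((n : ℝ) - 1) * t) - R)) ≠ 0) (i : Fin n) :
    fderiv ℝ (fun y => annulusBarrier n lam R y t) x (EuclideanSpace.single i 1) =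
      2 * (tan (lam * (√(‖x‖ ^ 2 + 2 * ((n : ℝ) - 1) * t) - R)) /
          (2 * √(‖x‖ ^ 2 + 2 * ((n : ℝ) - 1) * t))) * x i :=
  fderiv_comp_norm_sq_add_single
    (((hasDerivAt_neg_log_cos_sqrt R hlam hs hcos).add_const _).add_const _) i

theorem fderiv_fderiv_annulusBarrier_single (hlam : lam ≠ 0)
    (hs : 0 < ‖x‖ ^ 2 + 2 * ((n : ℝ) - 1) * t)
    (hcos : cos (lam * (√(‖x‖ ^ 2 + 2 * ((n : ℝ) - 1) * t) - R)) ≠ 0) (i j : Fin n) :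
    fderiv ℝ (fun y =>
        fderiv ℝ (fun z => annulusBarrier n lam R z t) y (EuclideanSpace.single i 1))
      x (EuclideanSpace.single j 1) =
      2 * (tan (lam * (√(‖x‖ ^ 2 + 2 * ((n : ℝ) - 1) * t) - R)) /
          (2 * √(‖x‖ ^ 2 + 2 * ((n : ℝ) - 1) * t))) * (if i = j then 1 else 0) +
        4 * (lam * (1 + tan (lam * (√(‖x‖ ^ 2 + 2 * ((n : ℝ) - 1) * t) - R)) ^ 2) /
            (4 * √(‖x‖ ^ 2 + 2 * ((n : ℝ) - 1) * t) ^ 2) -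
          tan (lam * (√(‖x‖ ^ 2 + 2 * ((n : ℝ) - 1) * t) - R)) /
            (4 * √(‖x‖ ^ 2 + 2 * ((n : ℝ) - 1) * t) ^ 3)) * x i * x j := by
  have hnear : ∀ᶠ u in 𝓝 (‖x‖ ^ 2 + 2 * ((n : ℝ) - 1) * t),
      0 < u ∧ cos (lam * (√u - R)) ≠ 0 :=
    (eventually_gt_nhds hs).and (ContinuousAt.eventually_ne (by fun_prop) hcos)
  exact fderiv_fderiv_comp_norm_sq_add_single
    (hnear.mono fun u hu =>
      ((hasDerivAt_neg_log_cos_sqrt R hlam hu.1 hu.2).add_const _).add_const _)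
    (hasDerivAt_tan_sqrt_div R hs hcos) i j

end annulusBarrier

theorem annulusBarrier_supersolution_general (n : ℕ) (lam R : ℝ)
    (hlam : 0 < lam) (hR : 0 < R)
    (t : ℝ) (ht : t ∈ Set.Icc 0 (R ^ 2 / (2 * ((n : ℝ) - 1))))
    (x : EuclideanSpace ℝ (Fin n)) (hx : x ≠ 0)
    (h1 : R - Real.pi / (2 * lam) < Real.sqrt (‖x‖ ^ 2 + 2 * ((n : ℝ) - 1) * t))
    (h2 : Real.sqrt (‖x‖ ^ 2 + 2 * ((n : ℝ) - 1) * t) < R + Real.pi / (2 * lam)) :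
    -(deriv (fun s => annulusBarrier n lam R x s) t) +
      ∑ i : Fin n, ∑ j : Fin n,
        ((if i = j then (1 : ℝ) else 0) -
            fderiv ℝ (fun y => annulusBarrier n lam R y t) x (EuclideanSpace.single i 1) *
              fderiv ℝ (fun y => annulusBarrier n lam R y t) x (EuclideanSpace.single j 1) /
              (1 + ∑ k : Fin n,
                (fderiv ℝ (fun y => annulusBarrier n lam R y t) x
                  (EuclideanSpace.single k 1)) ^ 2)) *
          fderiv ℝ (fun y =>
              fderiv ℝ (fun z => annulusBarrier n lam R z t) y (EuclideanSpace.single i 1))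
            x (EuclideanSpace.single j 1) ≤ 0 := by
  obtain ⟨ha0, haR⟩ := mul_mem_Icc_of_mem_Icc_div (sq_nonneg R) ht
  have hb : 0 < ‖x‖ ^ 2 := pow_pos (norm_pos_iff.2 hx) 2
  have hs : 0 < ‖x‖ ^ 2 + 2 * ((n : ℝ) - 1) * t := by linarith
  have hθ := mul_sub_mem_Ioo hlam h1 h2
  have hcos := (cos_pos_of_mem_Ioo hθ).ne'
  rw [(hasDerivAt_annulusBarrier_time hlam.ne' hs hcos).deriv]
  simp only [fderiv_annulusBarrier_single hlam.ne' hs hcos,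
    fderiv_fderiv_annulusBarrier_single hlam.ne' hs hcos]
  rw [meanCurvatureOperator_radial, Fintype.card_fin]
  have hρ2 : √(‖x‖ ^ 2 + 2 * ((n : ℝ) - 1) * t) ^ 2 = ‖x‖ ^ 2 + 2 * ((n : ℝ) - 1) * t :=
    sq_sqrt hs.le
  have key := radialQuotient_sub_le_of_mul_le hlam.le (sqrt_pos.2 hs) hb.le (by linarith)
    (sqrt_nonneg _) (tan_mul_le_sqrt_mul hlam hR (sqrt_nonneg _) hb.le (by linarith) hθ)
  set ρ := √(‖x‖ ^ 2 + 2 * ((n : ℝ) - 1) * t)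
  set T := tan (lam * (ρ - R))
  rw [show 2 * (T / (2 * ρ)) = T / ρ by ring,
    show 4 * (lam * (1 + T ^ 2) / (4 * ρ ^ 2) - T / (4 * ρ ^ 3)) =
      lam * (1 + T ^ 2) / ρ ^ 2 - T / ρ ^ 3 by ring]
  linarith

/-- On its annular domain (with `x ≠ 0`, `t ∈ [0, R²/(2(n-1))]`) the barrier
satisfies the supersolution inequality
`-∂ₜ w + (δ^{ij} - wⁱ wʲ/(1 + |∇w|²)) w_{ij} ≤ 0`. -/
theorem annulusBarrier_supersolution (n : ℕ) (hn : 2 ≤ n) (lam R : ℝ)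
    (hlam : 0 < lam) (hR : 0 < R)
    (t : ℝ) (ht : t ∈ Set.Icc 0 (R ^ 2 / (2 * ((n : ℝ) - 1))))
    (x : EuclideanSpace ℝ (Fin n)) (hx : x ≠ 0)
    (h1 : R - Real.pi / (2 * lam) < Real.sqrt (‖x‖ ^ 2 + 2 * ((n : ℝ) - 1) * t))
    (h2 : Real.sqrt (‖x‖ ^ 2 + 2 * ((n : ℝ) - 1) * t) < R + Real.pi / (2 * lam)) :
    -(deriv (fun s => annulusBarrier n lam R x s) t) +
      ∑ i : Fin n, ∑ j : Fin n,
        ((if i = j then (1 : ℝ) else 0) -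
            fderiv ℝ (fun y => annulusBarrier n lam R y t) x (EuclideanSpace.single i 1) *
              fderiv ℝ (fun y => annulusBarrier n lam R y t) x (EuclideanSpace.single j 1) /
              (1 + ∑ k : Fin n,
                (fderiv ℝ (fun y => annulusBarrier n lam R y t) x
                  (EuclideanSpace.single k 1)) ^ 2)) *
          fderiv ℝ (fun y =>
              fderiv ℝ (fun z => annulusBarrier n lam R z t) y (EuclideanSpace.single i 1))
            x (EuclideanSpace.single j 1) ≤ 0 :=
  annulusBarrier_supersolution_general n lam R hlam hR t ht x hx h1 h2
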